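/- arXiv:1801.00983 — 3 statements merged into one kernel-verified Lean document; each statement's English description precedes it below -/
import Mathlib

section
/- There exists a constant C > 0 with the following property. For every h ∈ (0,1], every real β with 1 ≤ β ≤ h^{-1/2}, every η ∈ ℝ, and every function v : ℝ → ℂ that is continuous on [-2,2] and twice continuously differentiable on (-2,2), if the function g defined on (-2,2) by g(z) = h·β^{-2}·v''(z) + (1 - h²η²)·v(z) is square-integrable on (-2,2), then sup_{z ∈ [-1,1]} ‖v(z)‖ ≤ C·( (∫_{{z : 1 ≤ |z| ≤ 2}} ‖v(z)‖² dz)^{1/2} + h^{-1}·β²·(∫_{-2}^{2} ‖g(z)‖² dz)^{1/2} ). -/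
/-!
Fix `z₀ ∈ [-1, 1]` and put `μ = β² (1 - h²η²) / h`, so that `v'' + μ v = (β² / h) g`.
Let `S` solve `S'' = -μ S` with `S'(0) = 1/2`, taking `sin`, a linear function, `sinh` or a
decaying exponential according to the sign and size of `μ`, so that `S` and `S'` are bounded on
`[0, 3]` uniformly in `μ`. Then `S (|x - z₀|)` is a fundamental solution of `∂² + μ`. Multiplying
it by a cutoff `χ` equal to `1` on `[-3/2, 3/2]` and vanishing outside `(-7/4, 7/4)`, Green's
second identity on `[z₀, 9/5]` and on `[-9/5, z₀]` gives
`v z₀ = ∫ (v'' + μ v) χ S(|x - z₀|) - ∫ v [∂², χ] S(|x - z₀|)`,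
and the commutator `[∂², χ]` lives where `χ' ≠ 0`, inside `1 ≤ |x| ≤ 2`. Bounding both integrals
and applying Cauchy–Schwarz gives the estimate with a constant independent of `μ`, hence of
`h`, `β` and `η`.
-/

open MeasureTheory Set Filter Topology Real
open scoped Interval

noncomputable section

theorem setIntegral_norm_le_sqrt_measure_mul_sqrt {α E : Type*} [MeasurableSpace α]
    [NormedAddCommGroup E] {μ : Measure α} {s : Set α} (hs : μ s ≠ ⊤) {f : α → E}
    (hf : MemLp f 2 (μ.restrict s)) :
    ∫ x in s, ‖f x‖ ∂μ ≤ √(μ.real s) * √(∫ x in s, ‖f x‖ ^ 2 ∂μ) := by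
  have : IsFiniteMeasure (μ.restrict s) := isFiniteMeasure_restrict.2 hs
  have h := integral_mul_le_Lp_mul_Lq_of_nonneg Real.HolderConjugate.two_two
    (Eventually.of_forall fun x => norm_nonneg (f x)) (Eventually.of_forall fun _ => zero_le_one)
    (by simpa using hf.norm) (by simpa using memLp_const (1 : ℝ))
  simpa [sqrt_eq_rpow, mul_comm] using h

theorem setIntegral_norm_le_two_mul_sqrt {E : Type*} [NormedAddCommGroup E] {v : ℝ → E}
    {s : Set ℝ} (hs : IsCompact s) (hs₂ : s ⊆ Icc (-2) 2) (hv : ContinuousOn v s) :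
    ∫ x in s, ‖v x‖ ≤ 2 * √(∫ x in s, ‖v x‖ ^ 2) := by
  have hm := hv.aestronglyMeasurable (μ := volume) hs.measurableSet
  have hvol : √(volume.real s) ≤ 2 :=
    (sqrt_le_left zero_le_two).2 <| (measureReal_mono hs₂ measure_Icc_lt_top.ne).trans
      (by simp [volume_real_Icc]; norm_num)
  calc ∫ x in s, ‖v x‖ ≤ √(volume.real s) * √(∫ x in s, ‖v x‖ ^ 2) :=
        setIntegral_norm_le_sqrt_measure_mul_sqrt hs.measure_lt_top.ne
          ((memLp_two_iff_integrable_sq_norm hm).2 ((hv.norm.pow 2).integrableOn_compact hs))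
    _ ≤ 2 * √(∫ x in s, ‖v x‖ ^ 2) := by gcongr

theorem sqrt_setIntegral_norm_sq_le_of_eqOn_smul {α E : Type*} [MeasurableSpace α]
    [NormedAddCommGroup E] [NormedSpace ℝ E] {μ : Measure α} {s t : Set α} {F g : α → E}
    {c : ℝ} (hc : 0 ≤ c) (hs : MeasurableSet s) (hst : s ⊆ t) (hFg : ∀ x ∈ s, F x = c • g x)
    (hg : IntegrableOn (fun x => ‖g x‖ ^ 2) t μ) :
    √(∫ x in s, ‖F x‖ ^ 2 ∂μ) ≤ c * √(∫ x in t, ‖g x‖ ^ 2 ∂μ) := by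
  calc √(∫ x in s, ‖F x‖ ^ 2 ∂μ) = √(c ^ 2 * ∫ x in s, ‖g x‖ ^ 2 ∂μ) := by
        rw [← integral_const_mul]
        congr 1
        refine setIntegral_congr_fun hs fun x hx => ?_
        rw [hFg x hx, norm_smul, Real.norm_of_nonneg hc, mul_pow]
    _ ≤ √(c ^ 2 * ∫ x in t, ‖g x‖ ^ 2 ∂μ) :=
        sqrt_le_sqrt <| mul_le_mul_of_nonneg_left (setIntegral_mono_set hg
          (Eventually.of_forall fun x => by positivity) hst.eventuallyLE) (sq_nonneg c)
    _ = c * √(∫ x in t, ‖g x‖ ^ 2 ∂μ) := by rw [sqrt_mul (sq_nonneg c), sqrt_sq hc]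

theorem integral_greens_second_identity {𝕜 : Type*} [RCLike 𝕜] {a b : ℝ}
    {u u' u'' w w' w'' : ℝ → 𝕜}
    (hu : ∀ x ∈ uIcc a b, HasDerivAt u (u' x) x) (hu' : ∀ x ∈ uIcc a b, HasDerivAt u' (u'' x) x)
    (hw : ∀ x ∈ uIcc a b, HasDerivAt w (w' x) x) (hw' : ∀ x ∈ uIcc a b, HasDerivAt w' (w'' x) x)
    (hu'' : ContinuousOn u'' (uIcc a b)) (hw'' : ContinuousOn w'' (uIcc a b)) :
    ∫ x in a..b, (u'' x * w x - u x * w'' x) =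
      (u' b * w b - u b * w' b) - (u' a * w a - u a * w' a) := by
  refine intervalIntegral.integral_eq_sub_of_hasDerivAt
    (f := fun x => u' x * w x - u x * w' x) (fun x hx => ?_) ?_
  · refine (((hu' x hx).mul (hw x hx)).sub ((hu x hx).mul (hw' x hx))).congr_deriv ?_
    ring
  · have hcu : ContinuousOn u (uIcc a b) := fun x hx => (hu x hx).continuousAt.continuousWithinAt
    have hcw : ContinuousOn w (uIcc a b) := fun x hx => (hw x hx).continuousAt.continuousWithinAt
    exact ((hu''.mul hcw).sub (hcu.mul hw'')).intervalIntegrable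

theorem ContDiffOn.hasDerivAt_deriv_of_two {E : Type*} [NormedAddCommGroup E] [NormedSpace ℝ E]
    {f : ℝ → E} {s : Set ℝ} (hf : ContDiffOn ℝ 2 f s)
    (hs : IsOpen s) {x : ℝ} (hx : x ∈ s) :
    HasDerivAt f (deriv f x) x ∧ HasDerivAt (deriv f) (deriv (deriv f) x) x :=
  ⟨(hf.differentiableOn (by norm_num)).hasDerivAt (hs.mem_nhds hx),
    ((hf.deriv_of_isOpen hs (m := 1) le_rfl).differentiableOn one_ne_zero).hasDerivAt
      (hs.mem_nhds hx)⟩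

def cutoff : ContDiffBump (0 : ℝ) := ⟨3 / 2, 7 / 4, by norm_num, by norm_num⟩

theorem cutoff_eq_one {x : ℝ} (hx : |x| ≤ 3 / 2) : cutoff x = 1 :=
  cutoff.one_of_mem_closedBall (by simpa [cutoff] using hx)

theorem cutoff_eq_zero {x : ℝ} (hx : 7 / 4 ≤ |x|) : cutoff x = 0 :=
  cutoff.zero_of_le_dist (by simpa [cutoff] using hx)

theorem cutoff_eventuallyEq_const {x : ℝ} (hx : |x| < 3 / 2 ∨ 7 / 4 < |x|) :
    ∃ c, (cutoff : ℝ → ℝ) =ᶠ[𝓝 x] fun _ => c := by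
  rcases hx with hx | hx
  · refine ⟨1, ?_⟩
    filter_upwards [(isOpen_lt continuous_abs continuous_const).mem_nhds hx] with y hy
    exact cutoff_eq_one hy.le
  · refine ⟨0, ?_⟩
    filter_upwards [(isOpen_lt continuous_const continuous_abs).mem_nhds hx] with y hy
    exact cutoff_eq_zero hy.le

theorem deriv_cutoff_eq_zero {x : ℝ} (hx : |x| < 3 / 2 ∨ 7 / 4 < |x|) : deriv cutoff x = 0 := by
  obtain ⟨c, h⟩ := cutoff_eventuallyEq_const hx
  rw [h.deriv_eq, deriv_const]

theorem deriv_deriv_cutoff_eq_zero {x : ℝ} (hx : |x| < 3 / 2 ∨ 7 / 4 < |x|) :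
    deriv (deriv cutoff) x = 0 := by
  obtain ⟨c, h⟩ := cutoff_eventuallyEq_const hx
  rw [h.deriv.deriv_eq, deriv_const', deriv_const]

theorem continuous_deriv_deriv_cutoff : Continuous (deriv (deriv cutoff)) :=
  (cutoff.contDiff (n := 2)).deriv'.continuous_deriv le_rfl

theorem exists_bound_deriv_cutoff :
    ∃ M, ∀ x, |deriv cutoff x| ≤ M ∧ |deriv (deriv cutoff) x| ≤ M := by
  obtain ⟨M₁, hM₁⟩ := (cutoff.contDiff.continuous_deriv le_rfl).bounded_above_of_compact_support
    cutoff.hasCompactSupport.deriv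
  obtain ⟨M₂, hM₂⟩ := continuous_deriv_deriv_cutoff.bounded_above_of_compact_support
    cutoff.hasCompactSupport.deriv.deriv
  exact ⟨max M₁ M₂, fun x => ⟨(hM₁ x).trans (le_max_left _ _), (hM₂ x).trans (le_max_right _ _)⟩⟩

theorem hasDerivAt_cutoff (x : ℝ) : HasDerivAt cutoff (deriv cutoff x) x :=
  ((cutoff.contDiff (n := 1)).differentiable (by norm_num) x).hasDerivAt

theorem hasDerivAt_deriv_cutoff (x : ℝ) : HasDerivAt (deriv cutoff) (deriv (deriv cutoff) x) x :=
  ((ContDiff.deriv' (n := 1) cutoff.contDiff).differentiable (by norm_num) x).hasDerivAt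

/-- The normalization `S'(0) = 1/2` makes `r ↦ S |r|` a fundamental solution of `∂² + μ`. -/
structure IsFundamentalKernel (μ B : ℝ) (S S' : ℝ → ℝ) : Prop where
  hasDerivAt : ∀ r, HasDerivAt S (S' r) r
  hasDerivAt_deriv : ∀ r, HasDerivAt S' (-μ * S r) r
  deriv_zero : S' 0 = 1 / 2
  bound : ∀ r ∈ Icc (0 : ℝ) 3, |S r| ≤ B ∧ |S' r| ≤ B

theorem IsFundamentalKernel.bound_nonneg {μ B : ℝ} {S S' : ℝ → ℝ}
    (hS : IsFundamentalKernel μ B S S') : 0 ≤ B :=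
  (abs_nonneg _).trans (hS.bound 0 ⟨le_rfl, by norm_num⟩).1

theorem Real.sinh_le_mul_exp (t : ℝ) : sinh t ≤ t * exp t := by
  have h : 1 - 2 * t ≤ exp (-(2 * t)) := by linarith [add_one_le_exp (-(2 * t))]
  have h' : exp t * exp (-(2 * t)) = exp (-t) := by rw [← exp_add]; ring_nf
  rw [sinh_eq]
  nlinarith [exp_pos t]

theorem Real.four_le_exp_three : 4 ≤ exp 3 := by linarith [add_one_le_exp 3]

theorem isFundamentalKernel_sin {ω : ℝ} (hω : 0 < ω) :
    IsFundamentalKernel (ω ^ 2) (2 * exp 3)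
      (fun r => sin (ω * r) / (2 * ω)) (fun r => cos (ω * r) / 2) where
  hasDerivAt r := by
    refine (((hasDerivAt_id' r).const_mul ω).sin.div_const (2 * ω)).congr_deriv ?_
    field_simp
  hasDerivAt_deriv r := by
    refine (((hasDerivAt_id' r).const_mul ω).cos.div_const 2).congr_deriv ?_
    field_simp
  deriv_zero := by simp
  bound r hr := by
    have hsin : |sin (ω * r)| ≤ ω * r :=
      abs_sin_le_abs.trans_eq (abs_of_nonneg (by nlinarith [hr.1]))
    have hcos := abs_cos_le_one (ω * r)
    have h4 := four_le_exp_three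
    rw [abs_div, abs_div, abs_of_pos (by positivity : (0 : ℝ) < 2 * ω), abs_two,
      div_le_iff₀ (by positivity), div_le_iff₀ two_pos]
    constructor <;> nlinarith [hr.2]

theorem isFundamentalKernel_linear :
    IsFundamentalKernel 0 (2 * exp 3) (fun r => r / 2) (fun _ => 1 / 2) where
  hasDerivAt r := by simpa using (hasDerivAt_id r).div_const 2
  hasDerivAt_deriv r := by simpa using hasDerivAt_const r (1 / 2 : ℝ)
  deriv_zero := rfl
  bound r hr := by
    have h4 := four_le_exp_three
    rw [abs_of_nonneg (by linarith [hr.1]), abs_of_pos (by norm_num)]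
    constructor <;> linarith [hr.2]

theorem isFundamentalKernel_sinh {κ : ℝ} (hκ : 0 < κ) (hκ1 : κ ≤ 1) :
    IsFundamentalKernel (-κ ^ 2) (2 * exp 3)
      (fun r => sinh (κ * r) / (2 * κ)) (fun r => cosh (κ * r) / 2) where
  hasDerivAt r := by
    refine (((hasDerivAt_id' r).const_mul κ).sinh.div_const (2 * κ)).congr_deriv ?_
    field_simp
  hasDerivAt_deriv r := by
    refine (((hasDerivAt_id' r).const_mul κ).cosh.div_const 2).congr_deriv ?_
    field_simp
  deriv_zero := by simp
  bound r hr := by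
    have ht : 0 ≤ κ * r := mul_nonneg hκ.le hr.1
    have hexp : exp (κ * r) ≤ exp 3 := exp_le_exp.2 (by nlinarith [hr.2])
    have hexp' : exp (-(κ * r)) ≤ exp (κ * r) := exp_le_exp.2 (by linarith)
    have hsinh : sinh (κ * r) ≤ κ * r * exp (κ * r) := sinh_le_mul_exp _
    have h4 := four_le_exp_three
    rw [abs_of_nonneg (div_nonneg (sinh_nonneg_iff.2 ht) (by positivity)),
      abs_of_pos (div_pos (cosh_pos _) two_pos), div_le_iff₀ (by positivity),
      div_le_iff₀ two_pos, cosh_eq]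
    constructor
    · have : κ * r * exp (κ * r) ≤ κ * 3 * exp 3 :=
        mul_le_mul (by nlinarith [hr.2]) hexp (exp_pos _).le (by positivity)
      nlinarith
    · linarith

theorem isFundamentalKernel_exp {κ : ℝ} (hκ : 1 ≤ κ) :
    IsFundamentalKernel (-κ ^ 2) (2 * exp 3)
      (fun r => -exp (-(κ * r)) / (2 * κ)) (fun r => exp (-(κ * r)) / 2) where
  hasDerivAt r := by
    refine (((hasDerivAt_id' r).const_mul κ).fun_neg.exp.neg.div_const (2 * κ)).congr_deriv ?_
    field_simp
  hasDerivAt_deriv r := by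
    refine (((hasDerivAt_id' r).const_mul κ).fun_neg.exp.div_const 2).congr_deriv ?_
    field_simp
  deriv_zero := by simp
  bound r hr := by
    have hexp : exp (-(κ * r)) ≤ 1 := exp_le_one_iff.2 (by nlinarith [hr.1])
    have h4 := four_le_exp_three
    rw [abs_div, abs_neg, abs_of_pos (exp_pos _), abs_of_pos (by positivity : (0 : ℝ) < 2 * κ),
      abs_of_pos (div_pos (exp_pos _) two_pos), div_le_iff₀ (by positivity), div_le_iff₀ two_pos]
    constructor <;> nlinarith

theorem exists_isFundamentalKernel (μ : ℝ) :
    ∃ S S', IsFundamentalKernel μ (2 * exp 3) S S' := by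
  rcases lt_trichotomy μ 0 with hμ | rfl | hμ
  · have hκ : (-√(-μ) ^ 2) = μ := by rw [sq_sqrt (by linarith)]; ring
    rcases le_total (√(-μ)) 1 with hκ1 | hκ1
    · exact hκ ▸ ⟨_, _, isFundamentalKernel_sinh (sqrt_pos.2 (by linarith)) hκ1⟩
    · exact hκ ▸ ⟨_, _, isFundamentalKernel_exp hκ1⟩
  · exact ⟨_, _, isFundamentalKernel_linear⟩
  · exact sq_sqrt hμ.le ▸ ⟨_, _, isFundamentalKernel_sin (sqrt_pos.2 hμ)⟩

section GreenWeight

variable (S S' : ℝ → ℝ) (σ z₀ : ℝ)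

-- Used with `σ = 1` on `[z₀, 9/5]` and `σ = -1` on `[-9/5, z₀]`, where it is `χ S(|· - z₀|)`.
def greenWeight (x : ℝ) : ℝ := cutoff x * S (σ * (x - z₀))

def greenWeightDeriv (x : ℝ) : ℝ :=
  deriv cutoff x * S (σ * (x - z₀)) + σ * (cutoff x * S' (σ * (x - z₀)))

-- `[∂², χ]` applied to `S (σ (· - z₀))`.
def cutoffCommutator (x : ℝ) : ℝ :=
  deriv (deriv cutoff) x * S (σ * (x - z₀)) + 2 * σ * (deriv cutoff x * S' (σ * (x - z₀)))

variable {S S' σ z₀}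

theorem hasDerivAt_greenWeight (hS : ∀ r, HasDerivAt S (S' r) r) (x : ℝ) :
    HasDerivAt (greenWeight S σ z₀) (greenWeightDeriv S S' σ z₀ x) x := by
  have hin : HasDerivAt (fun y => σ * (y - z₀)) σ x := by
    simpa using ((hasDerivAt_id' x).sub_const z₀).const_mul σ
  refine ((hasDerivAt_cutoff x).mul ((hS _).comp x hin)).congr_deriv ?_
  simp only [greenWeightDeriv, Function.comp_apply]
  ring

theorem hasDerivAt_greenWeightDeriv {μ B : ℝ} (hS : IsFundamentalKernel μ B S S') (hσ : σ ^ 2 = 1)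
    (x : ℝ) : HasDerivAt (greenWeightDeriv S S' σ z₀)
      (cutoffCommutator S S' σ z₀ x - μ * greenWeight S σ z₀ x) x := by
  have hin : HasDerivAt (fun y => σ * (y - z₀)) σ x := by
    simpa using ((hasDerivAt_id' x).sub_const z₀).const_mul σ
  refine (((hasDerivAt_deriv_cutoff x).mul ((hS.hasDerivAt _).comp x hin)).add
    (((hasDerivAt_cutoff x).mul ((hS.hasDerivAt_deriv _).comp x hin)).const_mul σ)).congr_deriv ?_
  simp only [cutoffCommutator, greenWeight, Function.comp_apply]
  linear_combination (-μ * cutoff x * S (σ * (x - z₀))) * hσ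

theorem greenWeight_self (hz₀ : |z₀| < 3 / 2) : greenWeight S σ z₀ z₀ = S 0 := by
  simp [greenWeight, cutoff_eq_one hz₀.le]

theorem greenWeightDeriv_self (hS' : S' 0 = 1 / 2) (hz₀ : |z₀| < 3 / 2) :
    greenWeightDeriv S S' σ z₀ z₀ = σ / 2 := by
  simp [greenWeightDeriv, cutoff_eq_one hz₀.le, deriv_cutoff_eq_zero (.inl hz₀), hS',
    div_eq_mul_inv]

theorem greenWeight_eq_zero {x : ℝ} (hx : 7 / 4 < |x|) : greenWeight S σ z₀ x = 0 := by
  simp [greenWeight, cutoff_eq_zero hx.le]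

theorem greenWeightDeriv_eq_zero {x : ℝ} (hx : 7 / 4 < |x|) :
    greenWeightDeriv S S' σ z₀ x = 0 := by
  simp [greenWeightDeriv, cutoff_eq_zero hx.le, deriv_cutoff_eq_zero (.inr hx)]

theorem continuous_greenWeight (hS : ∀ r, HasDerivAt S (S' r) r) :
    Continuous (greenWeight S σ z₀) :=
  continuous_iff_continuousAt.2 fun x => (hasDerivAt_greenWeight hS x).continuousAt

theorem continuous_cutoffCommutator {μ B : ℝ} (hS : IsFundamentalKernel μ B S S') :
    Continuous (cutoffCommutator S S' σ z₀) := by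
  have hcS : Continuous S :=
    continuous_iff_continuousAt.2 fun r => (hS.hasDerivAt r).continuousAt
  have hcS' : Continuous S' :=
    continuous_iff_continuousAt.2 fun r => (hS.hasDerivAt_deriv r).continuousAt
  have hc₁ : Continuous (deriv cutoff) := cutoff.contDiff.continuous_deriv le_rfl
  have hc₂ := continuous_deriv_deriv_cutoff
  unfold cutoffCommutator
  fun_prop

end GreenWeight

def helmholtzOp (μ : ℝ) (v : ℝ → ℂ) (x : ℝ) : ℂ := deriv (deriv v) x + μ * v x

theorem continuousOn_helmholtzOp {μ : ℝ} {v : ℝ → ℂ} {s : Set ℝ} (hs : IsOpen s)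
    (hv : ContDiffOn ℝ 2 v s) :
    ContinuousOn (helmholtzOp μ v) s :=
  ((hv.deriv_of_isOpen hs (m := 1) le_rfl).continuousOn_deriv_of_isOpen hs le_rfl).add
    (continuousOn_const.mul hv.continuousOn)

def greenIntegrand (μ : ℝ) (v : ℝ → ℂ) (S S' : ℝ → ℝ) (σ z₀ x : ℝ) : ℂ :=
  helmholtzOp μ v x * greenWeight S σ z₀ x - v x * cutoffCommutator S S' σ z₀ x

section Representation

variable {μ B σ z₀ : ℝ} {S S' : ℝ → ℝ} {v : ℝ → ℂ}

theorem mem_Icc_of_mem_uIcc_sign (hσ : σ = 1 ∨ σ = -1) (hz₀ : z₀ ∈ Icc (-1 : ℝ) 1) {x : ℝ}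
    (hx : x ∈ uIcc z₀ (σ * (9 / 5))) :
    x ∈ Icc (-(9 / 5) : ℝ) (9 / 5) ∧ σ * (x - z₀) ∈ Icc (0 : ℝ) 3 := by
  obtain ⟨h₁, h₂⟩ := hz₀
  rcases hσ with rfl | rfl
  · rw [uIcc_of_le (by linarith)] at hx
    exact ⟨⟨by linarith [hx.1], by linarith [hx.2]⟩, by constructor <;> linarith [hx.1, hx.2]⟩
  · rw [uIcc_of_ge (by linarith)] at hx
    exact ⟨⟨by linarith [hx.1], by linarith [hx.2]⟩, by constructor <;> linarith [hx.1, hx.2]⟩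

theorem greenIntegrand_eq (x : ℝ) : greenIntegrand μ v S S' σ z₀ x =
    deriv (deriv v) x * (greenWeight S σ z₀ x : ℂ) -
      v x * ((cutoffCommutator S S' σ z₀ x - μ * greenWeight S σ z₀ x : ℝ) : ℂ) := by
  simp only [greenIntegrand, helmholtzOp]
  push_cast
  ring

theorem greenIntegral_eq (hS : IsFundamentalKernel μ B S S') (hσ : σ = 1 ∨ σ = -1)
    (hz₀ : z₀ ∈ Icc (-1 : ℝ) 1) (hv : ContDiffOn ℝ 2 v (Ioo (-2) 2)) :
    σ * ∫ x in z₀..σ * (9 / 5), greenIntegrand μ v S S' σ z₀ x =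
      v z₀ / 2 - σ * S 0 * deriv v z₀ := by
  have hsub : uIcc z₀ (σ * (9 / 5)) ⊆ Ioo (-2) 2 := fun x hx =>
    Icc_subset_Ioo (by norm_num) (by norm_num) (mem_Icc_of_mem_uIcc_sign hσ hz₀ hx).1
  have hσ2 : σ ^ 2 = 1 := by rcases hσ with rfl | rfl <;> norm_num
  have hv₂ : ContinuousOn (deriv (deriv v)) (Ioo (-2) 2) :=
    (hv.deriv_of_isOpen isOpen_Ioo (m := 1) le_rfl).continuousOn_deriv_of_isOpen isOpen_Ioo le_rfl
  have hP : Continuous fun x =>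
      ((cutoffCommutator S S' σ z₀ x - μ * greenWeight S σ z₀ x : ℝ) : ℂ) :=
    Complex.continuous_ofReal.comp ((continuous_cutoffCommutator hS).sub
      (continuous_const.mul (continuous_greenWeight hS.hasDerivAt)))
  have h := integral_greens_second_identity (u := v)
    (w := fun x => (greenWeight S σ z₀ x : ℂ)) (w' := fun x => (greenWeightDeriv S S' σ z₀ x : ℂ))
    (fun x hx => (hv.hasDerivAt_deriv_of_two isOpen_Ioo (hsub hx)).1)
    (fun x hx => (hv.hasDerivAt_deriv_of_two isOpen_Ioo (hsub hx)).2)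
    (fun x _ => (hasDerivAt_greenWeight hS.hasDerivAt x).ofReal_comp)
    (fun x _ => (hasDerivAt_greenWeightDeriv hS hσ2 x).ofReal_comp)
    (hv₂.mono hsub) hP.continuousOn
  have hend : 7 / 4 < |σ * (9 / 5)| := by rcases hσ with rfl | rfl <;> norm_num
  have hz₀' : |z₀| < 3 / 2 := abs_lt.2 ⟨by linarith [hz₀.1], by linarith [hz₀.2]⟩
  simp only [greenWeight_self hz₀', greenWeightDeriv_self hS.deriv_zero hz₀',
    greenWeight_eq_zero hend, greenWeightDeriv_eq_zero hend] at h
  have hσ2' : (σ : ℂ) ^ 2 = 1 := by exact_mod_cast hσ2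
  simp_rw [greenIntegrand_eq, h]
  push_cast
  linear_combination (v z₀ / 2) * hσ2'

theorem eq_greenIntegral_sub_greenIntegral (hS : IsFundamentalKernel μ B S S')
    (hz₀ : z₀ ∈ Icc (-1 : ℝ) 1) (hv : ContDiffOn ℝ 2 v (Ioo (-2) 2)) :
    v z₀ = (∫ x in z₀..9 / 5, greenIntegrand μ v S S' 1 z₀ x) -
      ∫ x in z₀..-(9 / 5), greenIntegrand μ v S S' (-1) z₀ x := by
  have h_pos := greenIntegral_eq hS (.inl rfl) hz₀ hv
  have h_neg := greenIntegral_eq hS (.inr rfl) hz₀ hv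
  rw [one_mul] at h_pos
  rw [neg_one_mul] at h_neg
  push_cast at h_pos h_neg
  linear_combination -h_pos - h_neg

end Representation

def outerShell : Set ℝ := {z | 1 ≤ |z| ∧ |z| ≤ 2}

theorem outerShell_subset_Icc : outerShell ⊆ Icc (-2) 2 := fun _ hz => abs_le.1 hz.2

theorem isCompact_outerShell : IsCompact outerShell :=
  isCompact_Icc.of_isClosed_subset
    ((isClosed_le continuous_const continuous_abs).inter
      (isClosed_le continuous_abs continuous_const))
    outerShell_subset_Icc

section Estimates

variable {μ B M σ z₀ : ℝ} {S S' : ℝ → ℝ} {v : ℝ → ℂ}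

theorem cutoffCommutator_eq_zero {x : ℝ} (hx : |x| < 3 / 2) : cutoffCommutator S S' σ z₀ x = 0 := by
  simp [cutoffCommutator, deriv_cutoff_eq_zero (.inl hx), deriv_deriv_cutoff_eq_zero (.inl hx)]

theorem abs_cutoffCommutator_le (hS : IsFundamentalKernel μ B S S')
    (hM : ∀ x, |deriv cutoff x| ≤ M ∧ |deriv (deriv cutoff) x| ≤ M) (hσ : |σ| = 1) {x : ℝ}
    (hx : σ * (x - z₀) ∈ Icc (0 : ℝ) 3) : |cutoffCommutator S S' σ z₀ x| ≤ 3 * B * M := by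
  obtain ⟨hS₀, hS₁⟩ := hS.bound _ hx
  obtain ⟨hM₁, hM₂⟩ := hM x
  have hB := hS.bound_nonneg
  have hM₀ : 0 ≤ M := (abs_nonneg _).trans hM₁
  rw [cutoffCommutator]
  calc _ ≤ |deriv (deriv cutoff) x * S (σ * (x - z₀))| +
          |2 * σ * (deriv cutoff x * S' (σ * (x - z₀)))| := abs_add_le _ _
    _ = |deriv (deriv cutoff) x| * |S (σ * (x - z₀))| +
          2 * (|deriv cutoff x| * |S' (σ * (x - z₀))|) := by
        rw [abs_mul, abs_mul, abs_mul, abs_mul, abs_two, hσ, mul_one]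
    _ ≤ M * B + 2 * (M * B) := by gcongr
    _ = 3 * B * M := by ring

theorem norm_greenIntegrand_le (hS : IsFundamentalKernel μ B S S')
    (hM : ∀ x, |deriv cutoff x| ≤ M ∧ |deriv (deriv cutoff) x| ≤ M) (hσ : σ = 1 ∨ σ = -1)
    (hz₀ : z₀ ∈ Icc (-1 : ℝ) 1) {x : ℝ} (hx : x ∈ uIcc z₀ (σ * (9 / 5))) :
    ‖greenIntegrand μ v S S' σ z₀ x‖ ≤
      B * ‖helmholtzOp μ v x‖ + 3 * B * M * outerShell.indicator (fun y => ‖v y‖) x := by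
  obtain ⟨hxI, hr⟩ := mem_Icc_of_mem_uIcc_sign hσ hz₀ hx
  have hW : |greenWeight S σ z₀ x| ≤ B := by
    rw [greenWeight, abs_mul, abs_of_nonneg (cutoff.nonneg' x)]
    simpa using mul_le_mul cutoff.le_one (hS.bound _ hr).1 (abs_nonneg _) zero_le_one
  have hP : ‖v x * cutoffCommutator S S' σ z₀ x‖ ≤
      3 * B * M * outerShell.indicator (fun y => ‖v y‖) x := by
    by_cases hxA : x ∈ outerShell
    · rw [indicator_of_mem hxA, norm_mul, Complex.norm_real, Real.norm_eq_abs, mul_comm]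
      gcongr
      exact abs_cutoffCommutator_le hS hM (by rcases hσ with rfl | rfl <;> simp) hr
    · have hx1 : |x| < 1 := by
        by_contra h
        exact hxA ⟨not_lt.1 h, abs_le.2 ⟨by linarith [hxI.1], by linarith [hxI.2]⟩⟩
      rw [cutoffCommutator_eq_zero (by linarith), indicator_of_notMem hxA]
      simp
  calc ‖greenIntegrand μ v S S' σ z₀ x‖
      ≤ ‖helmholtzOp μ v x‖ * |greenWeight S σ z₀ x| + ‖v x * cutoffCommutator S S' σ z₀ x‖ := by
        refine (norm_sub_le _ _).trans_eq ?_
        rw [norm_mul, norm_mul, Complex.norm_real, Real.norm_eq_abs]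
    _ ≤ ‖helmholtzOp μ v x‖ * B + 3 * B * M * outerShell.indicator (fun y => ‖v y‖) x := by
        gcongr
    _ = _ := by ring

theorem continuousOn_greenIntegrand (hS : IsFundamentalKernel μ B S S')
    (hv : ContDiffOn ℝ 2 v (Ioo (-2) 2)) :
    ContinuousOn (greenIntegrand μ v S S' σ z₀) (Ioo (-2) 2) :=
  ((continuousOn_helmholtzOp isOpen_Ioo hv).mul
    (Complex.continuous_ofReal.comp (continuous_greenWeight hS.hasDerivAt)).continuousOn).sub
    (hv.continuousOn.mul
      (Complex.continuous_ofReal.comp (continuous_cutoffCommutator hS)).continuousOn)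

theorem norm_integral_greenIntegrand_le (hS : IsFundamentalKernel μ B S S')
    (hM : ∀ x, |deriv cutoff x| ≤ M ∧ |deriv (deriv cutoff) x| ≤ M) (hσ : σ = 1 ∨ σ = -1)
    (hz₀ : z₀ ∈ Icc (-1 : ℝ) 1) (hvc : ContinuousOn v (Icc (-2) 2))
    (hv : ContDiffOn ℝ 2 v (Ioo (-2) 2)) :
    ‖∫ x in z₀..σ * (9 / 5), greenIntegrand μ v S S' σ z₀ x‖ ≤
      B * (∫ x in Icc (-(9 / 5)) (9 / 5), ‖helmholtzOp μ v x‖) +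
        3 * B * M * ∫ x in outerShell, ‖v x‖ := by
  set I : Set ℝ := Icc (-(9 / 5)) (9 / 5)
  have hI : I ⊆ Ioo (-2) 2 := Icc_subset_Ioo (by norm_num) (by norm_num)
  have hLv : ContinuousOn (helmholtzOp μ v) (Ioo (-2) 2) := continuousOn_helmholtzOp isOpen_Ioo hv
  have hcA : MeasurableSet outerShell := isCompact_outerShell.measurableSet
  set G : ℝ → ℝ := fun x => B * I.indicator (fun y => ‖helmholtzOp μ v y‖) x +
    3 * B * M * outerShell.indicator (fun y => ‖v y‖) x
  have hG₁ : Integrable (I.indicator fun y => ‖helmholtzOp μ v y‖) :=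
    (integrable_indicator_iff measurableSet_Icc).2
      ((hLv.mono hI).norm.integrableOn_compact isCompact_Icc)
  have hG₂ : Integrable (outerShell.indicator fun y => ‖v y‖) :=
    (integrable_indicator_iff hcA).2
      ((hvc.mono outerShell_subset_Icc).norm.integrableOn_compact isCompact_outerShell)
  have hG : Integrable G := (hG₁.const_mul B).add (hG₂.const_mul _)
  have hB : 0 ≤ B := hS.bound_nonneg
  have hM₀ : 0 ≤ M := (abs_nonneg _).trans (hM 0).1
  have hG₀ : 0 ≤ G := fun x =>
    add_nonneg (mul_nonneg hB (indicator_nonneg (fun _ _ => norm_nonneg _) x))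
      (mul_nonneg (by positivity) (indicator_nonneg (fun _ _ => norm_nonneg _) x))
  have hsub : uIcc z₀ (σ * (9 / 5)) ⊆ Ioo (-2) 2 := fun x hx =>
    hI (mem_Icc_of_mem_uIcc_sign hσ hz₀ hx).1
  have hF : IntegrableOn (fun x => ‖greenIntegrand μ v S S' σ z₀ x‖) (uIcc z₀ (σ * (9 / 5))) :=
    ((continuousOn_greenIntegrand hS hv).mono hsub).norm.integrableOn_compact isCompact_uIcc
  calc ‖∫ x in z₀..σ * (9 / 5), greenIntegrand μ v S S' σ z₀ x‖
      ≤ ∫ x in Ι z₀ (σ * (9 / 5)), ‖greenIntegrand μ v S S' σ z₀ x‖ :=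
        intervalIntegral.norm_integral_le_integral_norm_uIoc
    _ ≤ ∫ x in Ι z₀ (σ * (9 / 5)), G x := by
        refine setIntegral_mono_on (hF.mono_set uIoc_subset_uIcc) hG.integrableOn
          measurableSet_uIoc fun x hx => ?_
        have hx' := uIoc_subset_uIcc hx
        have hxI : x ∈ I := (mem_Icc_of_mem_uIcc_sign hσ hz₀ hx').1
        simp only [G, indicator_of_mem hxI]
        exact norm_greenIntegrand_le hS hM hσ hz₀ hx'
    _ ≤ ∫ x, G x := setIntegral_le_integral hG (Eventually.of_forall hG₀)
    _ = _ := by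
        rw [integral_add (hG₁.const_mul B) (hG₂.const_mul _), integral_const_mul,
          integral_const_mul, integral_indicator measurableSet_Icc, integral_indicator hcA]

end Estimates

theorem exists_norm_le_integral_norm : ∃ C > 0, ∀ (μ : ℝ) (v : ℝ → ℂ),
    ContinuousOn v (Icc (-2) 2) → ContDiffOn ℝ 2 v (Ioo (-2) 2) → ∀ z₀ ∈ Icc (-1 : ℝ) 1,
      ‖v z₀‖ ≤ C * ((∫ x in outerShell, ‖v x‖) +
        ∫ x in Icc (-(9 / 5)) (9 / 5), ‖helmholtzOp μ v x‖) := by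
  obtain ⟨M, hM⟩ := exists_bound_deriv_cutoff
  have hM₀ : 0 ≤ M := (abs_nonneg _).trans (hM 0).1
  refine ⟨2 * (2 * exp 3) * (1 + 3 * M), by positivity, fun μ v hvc hv z₀ hz₀ => ?_⟩
  obtain ⟨S, S', hS⟩ := exists_isFundamentalKernel μ
  have h_pos := norm_integral_greenIntegrand_le hS hM (.inl rfl) hz₀ hvc hv
  have h_neg := norm_integral_greenIntegrand_le hS hM (.inr rfl) hz₀ hvc hv
  rw [one_mul] at h_pos
  rw [neg_one_mul] at h_neg
  have hA : 0 ≤ ∫ x in outerShell, ‖v x‖ := integral_nonneg fun _ => norm_nonneg _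
  have hL : 0 ≤ ∫ x in Icc (-(9 / 5)) (9 / 5), ‖helmholtzOp μ v x‖ :=
    integral_nonneg fun _ => norm_nonneg _
  have hB : 0 ≤ 2 * exp 3 := by positivity
  rw [eq_greenIntegral_sub_greenIntegral hS hz₀ hv]
  refine (norm_sub_le _ _).trans ?_
  nlinarith [mul_nonneg hB hA, mul_nonneg (mul_nonneg hB hM₀) hL]

theorem exists_norm_le_sqrt_integral_norm_sq : ∃ C > 0, ∀ (μ : ℝ) (v : ℝ → ℂ),
    ContinuousOn v (Icc (-2) 2) → ContDiffOn ℝ 2 v (Ioo (-2) 2) → ∀ z₀ ∈ Icc (-1 : ℝ) 1,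
      ‖v z₀‖ ≤ C * (√(∫ x in outerShell, ‖v x‖ ^ 2) +
        √(∫ x in Icc (-(9 / 5)) (9 / 5), ‖helmholtzOp μ v x‖ ^ 2)) := by
  obtain ⟨C, hC, hest⟩ := exists_norm_le_integral_norm
  refine ⟨2 * C, by positivity, fun μ v hvc hv z₀ hz₀ => (hest μ v hvc hv z₀ hz₀).trans ?_⟩
  have hA := setIntegral_norm_le_two_mul_sqrt isCompact_outerShell outerShell_subset_Icc
    (hvc.mono outerShell_subset_Icc)
  have hI : Icc (-(9 / 5) : ℝ) (9 / 5) ⊆ Ioo (-2) 2 := Icc_subset_Ioo (by norm_num) (by norm_num)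
  have hL := setIntegral_norm_le_two_mul_sqrt isCompact_Icc (hI.trans Ioo_subset_Icc_self)
    ((continuousOn_helmholtzOp (μ := μ) isOpen_Ioo hv).mono hI)
  calc C * ((∫ x in outerShell, ‖v x‖) + ∫ x in Icc (-(9 / 5)) (9 / 5), ‖helmholtzOp μ v x‖)
      ≤ C * (2 * √(∫ x in outerShell, ‖v x‖ ^ 2) +
          2 * √(∫ x in Icc (-(9 / 5)) (9 / 5), ‖helmholtzOp μ v x‖ ^ 2)) := by gcongr
    _ = _ := by ring

end

/-- Rescaled one-dimensional semiclassical estimate (Proposition 2.4):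
for `v` solving `(h β⁻² ∂_z² + 1 - h²η²) v = g` on `(-2,2)`,
`sup_{[-1,1]} ‖v‖ ≤ C (‖v‖_{L²({1≤|z|≤2})} + h⁻¹ β² ‖g‖_{L²(-2,2)})`. -/
theorem stmt_1 :
    ∃ C > 0, ∀ h : ℝ, h ∈ Ioc (0 : ℝ) 1 → ∀ β : ℝ, 1 ≤ β → β ≤ (Real.sqrt h)⁻¹ →
      ∀ (η : ℝ) (v g : ℝ → ℂ),
      ContinuousOn v (Icc (-2 : ℝ) 2) →
      ContDiffOn ℝ 2 v (Ioo (-2 : ℝ) 2) →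
      (∀ z ∈ Ioo (-2 : ℝ) 2,
        g z = (h : ℂ) * ((β : ℂ) ^ 2)⁻¹ * deriv (deriv v) z
          + (1 - (h : ℂ) ^ 2 * (η : ℂ) ^ 2) * v z) →
      IntegrableOn (fun z => ‖g z‖ ^ 2) (Ioo (-2 : ℝ) 2) →
      ∀ z ∈ Icc (-1 : ℝ) 1,
        ‖v z‖ ≤ C * (Real.sqrt (∫ z in {z : ℝ | 1 ≤ |z| ∧ |z| ≤ 2}, ‖v z‖ ^ 2) +
          h⁻¹ * β ^ 2 * Real.sqrt (∫ z in Ioo (-2 : ℝ) 2, ‖g z‖ ^ 2)) := by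
  obtain ⟨C, hC, hest⟩ := exists_norm_le_sqrt_integral_norm_sq
  refine ⟨C, hC, fun h hh β hβ _ η v g hvc hv hg hg₂ z hz => ?_⟩
  have hh₀ : 0 < h := hh.1
  have hh₀' : (h : ℂ) ≠ 0 := by exact_mod_cast hh₀.ne'
  have hβ₀' : (β : ℂ) ≠ 0 := by exact_mod_cast (zero_lt_one.trans_le hβ).ne'
  have hLg : ∀ x ∈ Icc (-(9 / 5) : ℝ) (9 / 5),
      helmholtzOp (h⁻¹ * β ^ 2 * (1 - h ^ 2 * η ^ 2)) v x = (h⁻¹ * β ^ 2) • g x := by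
    intro x hx
    rw [hg x (Icc_subset_Ioo (by norm_num) (by norm_num) hx), helmholtzOp, Complex.real_smul]
    push_cast
    field_simp
  calc ‖v z‖ ≤ C * (√(∫ x in outerShell, ‖v x‖ ^ 2) + √(∫ x in Icc (-(9 / 5)) (9 / 5),
        ‖helmholtzOp (h⁻¹ * β ^ 2 * (1 - h ^ 2 * η ^ 2)) v x‖ ^ 2)) := hest _ v hvc hv z hz
    _ ≤ _ := mul_le_mul_of_nonneg_left (add_le_add le_rfl
        (sqrt_setIntegral_norm_sq_le_of_eqOn_smul (by positivity) measurableSet_Icc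
          (Icc_subset_Ioo (by norm_num) (by norm_num)) hLg hg₂)) hC.le
end

section
/- Let A, B > 0 be real numbers and let n, m, p, q ∈ ℤ satisfy q·n - p·m = 1. Set L = √(n²A² + m²B²), Ξ₀ = (nA/L, mB/L), Ξ₀⊥ = (-mB/L, nA/L), and define F : ℝ² → ℝ² by F(x,y) = x·Ξ₀⊥ + y·Ξ₀. Set a = A·B/L, b = L, and γ = (p·n·A² + q·m·B²)/L. Then for every function u : ℝ² → ℂ satisfying u(X + (kA, ℓB)) = u(X) for all k, ℓ ∈ ℤ and all X ∈ ℝ², one has u(F(x + k·a, y + ℓ·b)) = u(F(x, y - k·γ)) for all k, ℓ ∈ ℤ and all (x,y) ∈ ℝ². -/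
/-!
`F` is linear, so `F (x + k a, y + l b) - F (x, y - k γ) = k (a Ξ₀⊥ + γ Ξ₀) + l (b Ξ₀)`.
Both vectors on the right lie in the lattice `Aℤ × Bℤ`: `b Ξ₀ = (nA, mB)`, and, using
`q n - p m = 1` and `L² = n²A² + m²B²`, `a Ξ₀⊥ + γ Ξ₀ = (pA, qB)`.
-/

lemma sq_mul_sq_add_sq_mul_sq_pos {A B : ℝ} {n m p q : ℤ} (hA : A ≠ 0) (hB : B ≠ 0)
    (hdet : q * n - p * m = 1) : 0 < (n : ℝ) ^ 2 * A ^ 2 + (m : ℝ) ^ 2 * B ^ 2 := by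
  rcases eq_or_ne n 0 with rfl | hn
  · have hm : (m : ℝ) ≠ 0 := Int.cast_ne_zero.2 (by rintro rfl; simp at hdet)
    rw [Int.cast_zero]
    positivity
  · have : (n : ℝ) ≠ 0 := Int.cast_ne_zero.2 hn
    positivity

lemma smul_direction_eq {A B L : ℝ} {n m : ℤ} (hL : L ≠ 0) :
    L • ((n : ℝ) * A / L, (m : ℝ) * B / L) = ((n : ℝ) * A, (m : ℝ) * B) := by
  simp only [Prod.smul_mk, smul_eq_mul, mul_div_cancel₀ _ hL]

lemma shear_vector_eq {A B L : ℝ} {n m p q : ℤ} (hL : L ≠ 0)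
    (hL2 : L ^ 2 = (n : ℝ) ^ 2 * A ^ 2 + (m : ℝ) ^ 2 * B ^ 2) (hdet : q * n - p * m = 1) :
    (A * B / L) • (-((m : ℝ) * B) / L, (n : ℝ) * A / L)
        + (((p : ℝ) * n * A ^ 2 + (q : ℝ) * m * B ^ 2) / L) • ((n : ℝ) * A / L, (m : ℝ) * B / L)
      = ((p : ℝ) * A, (q : ℝ) * B) := by
  have hdetR : (q : ℝ) * n - p * m = 1 := by exact_mod_cast hdet
  simp only [Prod.smul_mk, Prod.mk_add_mk, smul_eq_mul, Prod.mk.injEq]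
  constructor <;> field_simp
  · linear_combination (-A * p) * hL2 + (A * B ^ 2 * m) * hdetR
  · linear_combination (-B * q) * hL2 + (-A ^ 2 * B * n) * hdetR

lemma apply_add_zsmul_add_zsmul_of_periodic {α : Type*} {A B : ℝ} (u : ℝ × ℝ → α)
    (hper : ∀ (X : ℝ × ℝ) (k l : ℤ), u (X.1 + k * A, X.2 + l * B) = u X)
    (X : ℝ × ℝ) (k l i j i' j' : ℤ) :
    u (X + k • ((i : ℝ) * A, (j : ℝ) * B) + l • ((i' : ℝ) * A, (j' : ℝ) * B)) = u X := by
  convert hper X (k * i + l * i') (k * j + l * j') using 2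
  ext <;> simp only [Prod.fst_add, Prod.snd_add, Prod.smul_fst, Prod.smul_snd] <;>
    push_cast [zsmul_eq_mul] <;> ring

/-- Pseudo-periodicity lemma (Lemma 3.1, irrational case): after the orthogonal change of
coordinates `F` adapted to the rational direction `Ξ₀ = (nA, mB)/L`, a function periodic
with respect to the lattice `Aℤ × Bℤ` satisfies the pseudo-periodicity relation
`u(F(x + ka, y + ℓb)) = u(F(x, y - kγ))`. -/
theorem stmt_4 (A B : ℝ) (hA : 0 < A) (hB : 0 < B) (n m p q : ℤ)
    (hdet : q * n - p * m = 1)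
    (L : ℝ) (hL : L = Real.sqrt ((n : ℝ) ^ 2 * A ^ 2 + (m : ℝ) ^ 2 * B ^ 2))
    (Ξ₀ Ξ₀perp : ℝ × ℝ)
    (hΞ₀ : Ξ₀ = ((n : ℝ) * A / L, (m : ℝ) * B / L))
    (hΞ₀perp : Ξ₀perp = (-((m : ℝ) * B) / L, (n : ℝ) * A / L))
    (F : ℝ × ℝ → ℝ × ℝ) (hF : ∀ x y : ℝ, F (x, y) = x • Ξ₀perp + y • Ξ₀)
    (a b γ : ℝ) (ha : a = A * B / L) (hb : b = L)
    (hγ : γ = ((p : ℝ) * n * A ^ 2 + (q : ℝ) * m * B ^ 2) / L)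
    (u : ℝ × ℝ → ℂ)
    (hper : ∀ (X : ℝ × ℝ) (k l : ℤ), u (X.1 + k * A, X.2 + l * B) = u X) :
    ∀ (k l : ℤ) (x y : ℝ),
      u (F (x + k * a, y + l * b)) = u (F (x, y - k * γ)) := by
  intro k l x y
  have hpos := sq_mul_sq_add_sq_mul_sq_pos hA.ne' hB.ne' hdet
  have hL0 : L ≠ 0 := hL ▸ (Real.sqrt_pos.2 hpos).ne'
  have hL2 : L ^ 2 = (n : ℝ) ^ 2 * A ^ 2 + (m : ℝ) ^ 2 * B ^ 2 := hL ▸ Real.sq_sqrt hpos.le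
  have hshift : F (x + k * a, y + l * b)
      = F (x, y - k * γ) + k • (a • Ξ₀perp + γ • Ξ₀) + l • (b • Ξ₀) := by
    rw [hF, hF]
    module
  rw [hshift, ha, hγ, hb, hΞ₀, hΞ₀perp, shear_vector_eq hL0 hL2 hdet, smul_direction_eq hL0]
  exact apply_add_zsmul_add_zsmul_of_periodic u hper _ k l p q n m
end

section
/- Let m : ℝ² → ℝ be measurable and bounded, with m(X) ≥ 0 for almost every X and ∫_{[0,2]²} m > 0. Then there exists a constant C > 0 such that for every continuously differentiable function u : ℝ² → ℂ that is 2-periodic in each variable, ∫_{[0,2]²} ‖u‖² ≤ C·( ∫_{[0,2]²} ( ‖∂_x u‖² + ‖∂_y u‖² ) + ∫_{[0,2]²} m·‖u‖² ). -/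
/-!
Walking from `X = (x, y)` to `(x', y)` and then to `X' = (x', y')`, the fundamental theorem of
calculus and Cauchy–Schwarz bound `‖u X‖²` by `2 ‖u X'‖²` plus the energies of `∂ₓu` on the
horizontal line through `X` and of `∂ᵧu` on the vertical line through `X'`. Multiplying by
`m X' ≥ 0` and integrating in `X'` and then in `X`, Fubini turns the line energies into the
Dirichlet energy, so that `(∫ m) ‖u‖² ≲ ‖∇u‖² + ‖m^{1/2} u‖²`; since `∫ m > 0` this is the claim.
-/

open MeasureTheory Set

section Calculus

variable {E : Type*} [NormedAddCommGroup E] [NormedSpace ℝ E]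

theorem sq_integral_le_measureReal_mul_integral_sq {α : Type*} [MeasurableSpace α]
    {μ : Measure α} [IsFiniteMeasure μ] {g : α → ℝ} (hg : Integrable g μ)
    (hg2 : Integrable (fun x => g x ^ 2) μ) :
    (∫ x, g x ∂μ) ^ 2 ≤ μ.real univ * ∫ x, g x ^ 2 ∂μ := by
  rcases eq_zero_or_neZero μ with rfl | _
  · simp
  have jensen := even_two.convexOn_pow.map_average_le (continuous_pow 2).continuousOn
    isClosed_univ (ae_of_all _ fun x => mem_univ (g x)) hg hg2
  rw [average_eq, average_eq, smul_eq_mul, smul_eq_mul, mul_pow] at jensen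
  have := mul_le_mul_of_nonneg_left jensen (sq_nonneg (μ.real univ))
  field_simp [measureReal_univ_pos.ne'] at this
  nlinarith [measureReal_univ_pos (μ := μ)]

theorem norm_sub_le_setIntegral_norm_deriv [CompleteSpace E] {v d : ℝ → E} {a b x x' : ℝ}
    (hv : ∀ t ∈ Icc a b, HasDerivAt v (d t) t) (hd : ContinuousOn d (Icc a b))
    (hx : x ∈ Icc a b) (hx' : x' ∈ Icc a b) :
    ‖v x - v x'‖ ≤ ∫ t in Icc a b, ‖d t‖ := by
  have hsub : uIcc x' x ⊆ Icc a b := uIcc_subset_Icc hx' hx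
  rw [← intervalIntegral.integral_eq_sub_of_hasDerivAt (fun t ht => hv t (hsub ht))
    (hd.mono hsub).intervalIntegrable]
  calc ‖∫ t in x'..x, d t‖ ≤ ∫ t in uIoc x' x, ‖d t‖ :=
        intervalIntegral.norm_integral_le_integral_norm_uIoc
    _ ≤ ∫ t in Icc a b, ‖d t‖ :=
        setIntegral_mono_set (hd.norm.integrableOn_compact isCompact_Icc)
          (ae_of_all _ fun t => norm_nonneg (d t)) (uIoc_subset_uIcc.trans hsub).eventuallyLE

theorem norm_sub_sq_le_of_hasDerivAt [CompleteSpace E] {v d : ℝ → E} {a b x x' : ℝ}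
    (hv : ∀ t ∈ Icc a b, HasDerivAt v (d t) t) (hd : ContinuousOn d (Icc a b))
    (hx : x ∈ Icc a b) (hx' : x' ∈ Icc a b) :
    ‖v x - v x'‖ ^ 2 ≤ (b - a) * ∫ t in Icc a b, ‖d t‖ ^ 2 := by
  have hCS := sq_integral_le_measureReal_mul_integral_sq (μ := volume.restrict (Icc a b))
    (hd.norm.integrableOn_compact isCompact_Icc)
    ((hd.norm.pow 2).integrableOn_compact isCompact_Icc)
  rw [measureReal_restrict_apply_univ, Real.volume_real_Icc_of_le (hx.1.trans hx.2)] at hCS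
  calc ‖v x - v x'‖ ^ 2 ≤ (∫ t in Icc a b, ‖d t‖) ^ 2 := by
        gcongr; exact norm_sub_le_setIntegral_norm_deriv hv hd hx hx'
    _ ≤ (b - a) * ∫ t in Icc a b, ‖d t‖ ^ 2 := hCS

noncomputable def partialFst (u : ℝ × ℝ → E) (X : ℝ × ℝ) : E := deriv (fun t => u (t, X.2)) X.1

noncomputable def partialSnd (u : ℝ × ℝ → E) (X : ℝ × ℝ) : E := deriv (fun t => u (X.1, t)) X.2

theorem hasDerivAt_partialFst {u : ℝ × ℝ → E} {x y : ℝ} (hu : DifferentiableAt ℝ u (x, y)) :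
    HasDerivAt (fun t => u (t, y)) (partialFst u (x, y)) x :=
  (hu.comp x (differentiableAt_id.prodMk (differentiableAt_const y))).hasDerivAt

theorem hasDerivAt_partialSnd {u : ℝ × ℝ → E} {x y : ℝ} (hu : DifferentiableAt ℝ u (x, y)) :
    HasDerivAt (fun t => u (x, t)) (partialSnd u (x, y)) y :=
  (hu.comp y ((differentiableAt_const x).prodMk differentiableAt_id)).hasDerivAt

theorem partialFst_eq_fderiv {u : ℝ × ℝ → E} (hu : Differentiable ℝ u) :
    partialFst u = fun X => fderiv ℝ u X (1, 0) :=
  funext fun X => (hasDerivAt_partialFst (hu X)).unique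
    ((hu X).hasFDerivAt.comp_hasDerivAt X.1 ((hasDerivAt_id X.1).prodMk (hasDerivAt_const _ X.2)))

theorem partialSnd_eq_fderiv {u : ℝ × ℝ → E} (hu : Differentiable ℝ u) :
    partialSnd u = fun X => fderiv ℝ u X (0, 1) :=
  funext fun X => (hasDerivAt_partialSnd (hu X)).unique
    ((hu X).hasFDerivAt.comp_hasDerivAt X.2 ((hasDerivAt_const _ X.1).prodMk (hasDerivAt_id X.2)))

theorem ContDiff.continuous_partialFst {u : ℝ × ℝ → E} (hu : ContDiff ℝ 1 u) :
    Continuous (partialFst u) := by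
  rw [partialFst_eq_fderiv (hu.differentiable one_ne_zero)]
  exact (hu.continuous_fderiv one_ne_zero).clm_apply continuous_const

theorem ContDiff.continuous_partialSnd {u : ℝ × ℝ → E} (hu : ContDiff ℝ 1 u) :
    Continuous (partialSnd u) := by
  rw [partialSnd_eq_fderiv (hu.differentiable one_ne_zero)]
  exact (hu.continuous_fderiv one_ne_zero).clm_apply continuous_const

theorem norm_sq_le_of_mem_Icc_prod [CompleteSpace E] {u : ℝ × ℝ → E} (hu : ContDiff ℝ 1 u)
    {a b c d : ℝ} {X X' : ℝ × ℝ} (hX : X ∈ Icc a b ×ˢ Icc c d) (hX' : X' ∈ Icc a b ×ˢ Icc c d) :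
    ‖u X‖ ^ 2 ≤ 2 * ‖u X'‖ ^ 2 + 4 * (b - a) * (∫ t in Icc a b, ‖partialFst u (t, X.2)‖ ^ 2)
      + 4 * (d - c) * ∫ t in Icc c d, ‖partialSnd u (X'.1, t)‖ ^ 2 := by
  obtain ⟨x, y⟩ := X
  obtain ⟨x', y'⟩ := X'
  dsimp only
  have hdiff := hu.differentiable one_ne_zero
  have hfst := norm_sub_sq_le_of_hasDerivAt (v := fun t => u (t, y))
    (fun t _ => hasDerivAt_partialFst (hdiff _))
    (hu.continuous_partialFst.comp (.prodMk_left y)).continuousOn (x := x) (x' := x') hX.1 hX'.1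
  have hsnd := norm_sub_sq_le_of_hasDerivAt (v := fun t => u (x', t))
    (fun t _ => hasDerivAt_partialSnd (hdiff _))
    (hu.continuous_partialSnd.comp (.prodMk_right x')).continuousOn (x := y) (x' := y') hX.2 hX'.2
  set p := ‖u (x', y')‖
  set q := ‖u (x, y) - u (x', y)‖
  set r := ‖u (x', y) - u (x', y')‖
  have htri : ‖u (x, y)‖ ≤ p + q + r :=
    calc ‖u (x, y)‖ = ‖u (x', y') + (u (x, y) - u (x', y)) + (u (x', y) - u (x', y'))‖ := by
          congr 1; abel
      _ ≤ p + q + r := norm_add₃_le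
  calc ‖u (x, y)‖ ^ 2 ≤ (p + q + r) ^ 2 := pow_le_pow_left₀ (norm_nonneg _) htri 2
    _ ≤ 2 * p ^ 2 + 4 * q ^ 2 + 4 * r ^ 2 := by nlinarith [sq_nonneg (p - q - r), sq_nonneg (q - r)]
    _ ≤ _ := by linarith

end Calculus

section Integration

theorem integral_mul_integral_le_of_le_add {α : Type*} [MeasurableSpace α] {μ : Measure α}
    [IsFiniteMeasure μ] {m f h g : α → ℝ} (hm0 : ∀ᵐ x ∂μ, 0 ≤ m x) (hm : Integrable m μ)
    (hf : Integrable f μ) (hh : Integrable h μ) (hmg : Integrable (fun x => m x * g x) μ)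
    (hle : ∀ᵐ x ∂μ, ∀ᵐ x' ∂μ, f x ≤ h x + g x') :
    (∫ x, m x ∂μ) * ∫ x, f x ∂μ ≤
      (∫ x, m x ∂μ) * ∫ x, h x ∂μ + μ.real univ * ∫ x, m x * g x ∂μ := by
  have hslice : ∀ᵐ x ∂μ,
      (∫ x', m x' ∂μ) * f x ≤ (∫ x', m x' ∂μ) * h x + ∫ x', m x' * g x' ∂μ := by
    filter_upwards [hle] with x hx
    calc (∫ x', m x' ∂μ) * f x = ∫ x', m x' * f x ∂μ := (integral_mul_const _ _).symm
      _ ≤ ∫ x', (h x * m x' + m x' * g x') ∂μ := by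
          refine integral_mono_ae (hm.mul_const _) ((hm.const_mul _).add hmg) ?_
          filter_upwards [hx, hm0] with x' hx' hm0x'
          nlinarith [mul_le_mul_of_nonneg_left hx' hm0x']
      _ = (∫ x', m x' ∂μ) * h x + ∫ x', m x' * g x' ∂μ := by
          rw [integral_add (hm.const_mul _) hmg, integral_const_mul, mul_comm]
  calc (∫ x, m x ∂μ) * ∫ x, f x ∂μ = ∫ x, (∫ x', m x' ∂μ) * f x ∂μ :=
        (integral_const_mul _ _).symm
    _ ≤ ∫ x, ((∫ x', m x' ∂μ) * h x + ∫ x', m x' * g x' ∂μ) ∂μ :=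
        integral_mono_ae (hf.const_mul _) ((hh.const_mul _).add (integrable_const _)) hslice
    _ = _ := by
        rw [integral_add (hh.const_mul _) (integrable_const _), integral_const_mul,
          integral_const, smul_eq_mul]

theorem integrableOn_mul_of_continuous {X : Type*} [TopologicalSpace X] [T2Space X]
    [MeasurableSpace X] [OpensMeasurableSpace X] {μ : Measure X} [IsFiniteMeasureOnCompacts μ]
    {s : Set X} (hs : IsCompact s) {m g : X → ℝ} {M : ℝ}
    (hm : AEStronglyMeasurable m (μ.restrict s)) (hmM : ∀ᵐ x ∂μ.restrict s, ‖m x‖ ≤ M)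
    (hg : Continuous g) : IntegrableOn (fun x => m x * g x) s μ :=
  (hg.continuousOn.integrableOn_compact hs).bdd_mul hm hmM

variable {α β E : Type*} [MeasurableSpace α] [MeasurableSpace β] {μ : Measure α} {ν : Measure β}
  [SFinite μ] [SFinite ν] [NormedAddCommGroup E] [NormedSpace ℝ E]

theorem integral_prod_integral_fst {f : α × β → E} (hf : Integrable f (μ.prod ν)) :
    ∫ z, (∫ x, f (x, z.2) ∂μ) ∂μ.prod ν = μ.real univ • ∫ z, f z ∂μ.prod ν := by
  rw [integral_fun_snd (fun y => ∫ x, f (x, y) ∂μ), integral_prod_symm f hf]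

theorem integral_prod_integral_snd {f : α × β → E} (hf : Integrable f (μ.prod ν)) :
    ∫ z, (∫ y, f (z.1, y) ∂ν) ∂μ.prod ν = ν.real univ • ∫ z, f z ∂μ.prod ν := by
  rw [integral_fun_fst (fun x => ∫ y, f (x, y) ∂ν), integral_prod f hf]

end Integration

section Rectangle

variable {a b c d : ℝ}

theorem volume_restrict_Icc_prod_Icc :
    volume.restrict (Icc a b ×ˢ Icc c d) =
      (volume.restrict (Icc a b)).prod (volume.restrict (Icc c d)) := by
  rw [Measure.volume_eq_prod, Measure.prod_restrict]

theorem volume_real_Icc_prod_Icc (hab : a ≤ b) (hcd : c ≤ d) :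
    volume.real (Icc a b ×ˢ Icc c d) = (b - a) * (d - c) := by
  rw [Measure.volume_eq_prod, measureReal_prod_prod, Real.volume_real_Icc_of_le hab,
    Real.volume_real_Icc_of_le hcd]

theorem setIntegral_Icc_prod_integral_fst (hab : a ≤ b) {f : ℝ × ℝ → ℝ}
    (hf : IntegrableOn f (Icc a b ×ˢ Icc c d)) :
    ∫ X in Icc a b ×ˢ Icc c d, (∫ t in Icc a b, f (t, X.2)) =
      (b - a) * ∫ X in Icc a b ×ˢ Icc c d, f X := by
  rw [IntegrableOn, volume_restrict_Icc_prod_Icc] at hf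
  rw [volume_restrict_Icc_prod_Icc, integral_prod_integral_fst hf, measureReal_restrict_apply_univ,
    Real.volume_real_Icc_of_le hab, smul_eq_mul]

theorem setIntegral_Icc_prod_integral_snd (hcd : c ≤ d) {f : ℝ × ℝ → ℝ}
    (hf : IntegrableOn f (Icc a b ×ˢ Icc c d)) :
    ∫ X in Icc a b ×ˢ Icc c d, (∫ t in Icc c d, f (X.1, t)) =
      (d - c) * ∫ X in Icc a b ×ˢ Icc c d, f X := by
  rw [IntegrableOn, volume_restrict_Icc_prod_Icc] at hf
  rw [volume_restrict_Icc_prod_Icc, integral_prod_integral_snd hf, measureReal_restrict_apply_univ,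
    Real.volume_real_Icc_of_le hcd, smul_eq_mul]

variable {E : Type*} [NormedAddCommGroup E] [NormedSpace ℝ E] {u : ℝ × ℝ → E}

theorem ContDiff.continuous_setIntegral_norm_partialFst_sq (hu : ContDiff ℝ 1 u) :
    Continuous fun y => ∫ t in Icc a b, ‖partialFst u (t, y)‖ ^ 2 :=
  continuous_parametric_integral_of_continuous (f := fun y t => ‖partialFst u (t, y)‖ ^ 2)
    (by have := hu.continuous_partialFst; fun_prop) isCompact_Icc

theorem ContDiff.continuous_setIntegral_norm_partialSnd_sq (hu : ContDiff ℝ 1 u) :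
    Continuous fun x => ∫ t in Icc c d, ‖partialSnd u (x, t)‖ ^ 2 :=
  continuous_parametric_integral_of_continuous (f := fun x t => ‖partialSnd u (x, t)‖ ^ 2)
    (by have := hu.continuous_partialSnd; fun_prop) isCompact_Icc

theorem weighted_poincare_Icc_prod' [CompleteSpace E] (hu : ContDiff ℝ 1 u) (hab : a ≤ b)
    (hcd : c ≤ d) {m : ℝ × ℝ → ℝ} {M : ℝ}
    (hmeas : AEStronglyMeasurable m (volume.restrict (Icc a b ×ˢ Icc c d)))
    (hm0 : ∀ᵐ X ∂(volume.restrict (Icc a b ×ˢ Icc c d)), 0 ≤ m X)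
    (hmM : ∀ᵐ X ∂(volume.restrict (Icc a b ×ˢ Icc c d)), ‖m X‖ ≤ M) :
    (∫ X in Icc a b ×ˢ Icc c d, m X) * ∫ X in Icc a b ×ˢ Icc c d, ‖u X‖ ^ 2 ≤
      4 * (b - a) ^ 2 * (∫ X in Icc a b ×ˢ Icc c d, m X) *
          (∫ X in Icc a b ×ˢ Icc c d, ‖partialFst u X‖ ^ 2)
        + (b - a) * (d - c) * (2 * (∫ X in Icc a b ×ˢ Icc c d, m X * ‖u X‖ ^ 2)
          + 4 * (d - c) * ∫ X in Icc a b ×ˢ Icc c d,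
              m X * ∫ t in Icc c d, ‖partialSnd u (X.1, t)‖ ^ 2) := by
  set Q := Icc a b ×ˢ Icc c d
  have hQ : IsCompact Q := isCompact_Icc.prod isCompact_Icc
  have : IsFiniteMeasure (volume.restrict Q) := ⟨by simpa using hQ.measure_lt_top⟩
  set F := fun y => ∫ t in Icc a b, ‖partialFst u (t, y)‖ ^ 2
  set G := fun x => ∫ t in Icc c d, ‖partialSnd u (x, t)‖ ^ 2
  have hF : Continuous F := hu.continuous_setIntegral_norm_partialFst_sq
  have hG : Continuous G := hu.continuous_setIntegral_norm_partialSnd_sq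
  have hmint (g : ℝ × ℝ → ℝ) (hg : Continuous g) : IntegrableOn (fun X => m X * g X) Q :=
    integrableOn_mul_of_continuous hQ hmeas hmM hg
  have hle : ∀ᵐ X ∂volume.restrict Q, ∀ᵐ X' ∂volume.restrict Q,
      ‖u X‖ ^ 2 ≤ 4 * (b - a) * F X.2 + (2 * ‖u X'‖ ^ 2 + 4 * (d - c) * G X'.1) := by
    have hQm : MeasurableSet Q := measurableSet_Icc.prod measurableSet_Icc
    filter_upwards [ae_restrict_mem hQm] with X hX
    filter_upwards [ae_restrict_mem hQm] with X' hX'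
    linarith [norm_sq_le_of_mem_Icc_prod hu hX hX']
  have hm : IntegrableOn m Q := by simpa only [mul_one] using hmint (fun _ => 1) continuous_const
  have key := integral_mul_integral_le_of_le_add (f := fun X => ‖u X‖ ^ 2)
    (h := fun X => 4 * (b - a) * F X.2) (g := fun X => 2 * ‖u X‖ ^ 2 + 4 * (d - c) * G X.1) hm0 hm
    ((hu.continuous.norm.pow 2).continuousOn.integrableOn_compact hQ)
    (((hF.comp continuous_snd).continuousOn.integrableOn_compact hQ).const_mul (4 * (b - a)))
    (hmint _ ((continuous_const.mul (hu.continuous.norm.pow 2)).add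
      (continuous_const.mul (hG.comp continuous_fst)))) hle
  have hFint : ∫ X in Q, 4 * (b - a) * F X.2 =
      4 * (b - a) * ((b - a) * ∫ X in Q, ‖partialFst u X‖ ^ 2) := by
    rw [integral_const_mul, setIntegral_Icc_prod_integral_fst hab
      (f := fun X => ‖partialFst u X‖ ^ 2)
      ((hu.continuous_partialFst.norm.pow 2).continuousOn.integrableOn_compact hQ)]
  have hGint : ∫ X in Q, m X * (2 * ‖u X‖ ^ 2 + 4 * (d - c) * G X.1) =
      2 * (∫ X in Q, m X * ‖u X‖ ^ 2) + 4 * (d - c) * ∫ X in Q, m X * G X.1 := by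
    rw [integral_congr_ae (g := fun X => 2 * (m X * ‖u X‖ ^ 2) + 4 * (d - c) * (m X * G X.1))
        (ae_of_all _ fun X => by ring),
      integral_add ((hmint (fun X => ‖u X‖ ^ 2) (hu.continuous.norm.pow 2)).const_mul 2)
        ((hmint (fun X => G X.1) (hG.comp continuous_fst)).const_mul _),
      integral_const_mul, integral_const_mul]
  rw [hFint, hGint, measureReal_restrict_apply_univ, volume_real_Icc_prod_Icc hab hcd] at key
  linarith

theorem weighted_poincare_Icc_prod [CompleteSpace E] (hu : ContDiff ℝ 1 u) (hab : a ≤ b)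
    (hcd : c ≤ d) {m : ℝ × ℝ → ℝ} {M : ℝ}
    (hmeas : AEStronglyMeasurable m (volume.restrict (Icc a b ×ˢ Icc c d)))
    (hm0 : ∀ᵐ X ∂(volume.restrict (Icc a b ×ˢ Icc c d)), 0 ≤ m X)
    (hmM : ∀ᵐ X ∂(volume.restrict (Icc a b ×ˢ Icc c d)), ‖m X‖ ≤ M) :
    (∫ X in Icc a b ×ˢ Icc c d, m X) * ∫ X in Icc a b ×ˢ Icc c d, ‖u X‖ ^ 2 ≤
      4 * (b - a) ^ 2 * (∫ X in Icc a b ×ˢ Icc c d, m X) *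
          (∫ X in Icc a b ×ˢ Icc c d, ‖partialFst u X‖ ^ 2)
        + (b - a) * (d - c) * (2 * (∫ X in Icc a b ×ˢ Icc c d, m X * ‖u X‖ ^ 2)
          + 4 * (d - c) ^ 2 * M * ∫ X in Icc a b ×ˢ Icc c d, ‖partialSnd u X‖ ^ 2) := by
  set Q := Icc a b ×ˢ Icc c d
  have hQ : IsCompact Q := isCompact_Icc.prod isCompact_Icc
  set G := fun x => ∫ t in Icc c d, ‖partialSnd u (x, t)‖ ^ 2
  have hG : Continuous fun X : ℝ × ℝ => G X.1 :=
    hu.continuous_setIntegral_norm_partialSnd_sq.comp continuous_fst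
  have hmG : ∫ X in Q, m X * G X.1 ≤ M * ((d - c) * ∫ X in Q, ‖partialSnd u X‖ ^ 2) := by
    rw [← setIntegral_Icc_prod_integral_snd hcd (f := fun X => ‖partialSnd u X‖ ^ 2)
        ((hu.continuous_partialSnd.norm.pow 2).continuousOn.integrableOn_compact hQ),
      ← integral_const_mul]
    refine integral_mono_ae (integrableOn_mul_of_continuous hQ hmeas hmM hG)
      ((hG.continuousOn.integrableOn_compact hQ).const_mul M) ?_
    filter_upwards [hmM] with X hX
    exact mul_le_mul_of_nonneg_right ((Real.le_norm_self _).trans hX)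
      (setIntegral_nonneg measurableSet_Icc fun t _ => sq_nonneg _)
  have hQ0 : 0 ≤ (b - a) * (d - c) := mul_nonneg (sub_nonneg.2 hab) (sub_nonneg.2 hcd)
  nlinarith [weighted_poincare_Icc_prod' hu hab hcd hmeas hm0 hmM,
    mul_le_mul_of_nonneg_left hmG hQ0]

end Rectangle

/-- Norm-equivalence lemma (Appendix A.2, torus case): for a nontrivial nonnegative
bounded potential `m`, the degenerate energy norm `(‖∇u‖² + ‖m^{1/2}u‖²)^{1/2}` controls
the full `L²` norm of any `C¹` function `u` that is 2-periodic in each variable. -/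
theorem stmt_9 (m : ℝ × ℝ → ℝ) (hmeas : Measurable m) (hbd : ∃ M : ℝ, ∀ X, |m X| ≤ M)
    (hnonneg : ∀ᵐ X : ℝ × ℝ, 0 ≤ m X)
    (hpos : 0 < ∫ X in Icc (0 : ℝ) 2 ×ˢ Icc (0 : ℝ) 2, m X) :
    ∃ C > 0, ∀ u : ℝ × ℝ → ℂ, ContDiff ℝ 1 u →
      (∀ (x y : ℝ) (k l : ℤ), u (x + 2 * k, y + 2 * l) = u (x, y)) →
      (∫ X in Icc (0 : ℝ) 2 ×ˢ Icc (0 : ℝ) 2, ‖u X‖ ^ 2) ≤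
        C * ((∫ X in Icc (0 : ℝ) 2 ×ˢ Icc (0 : ℝ) 2,
            (‖deriv (fun t => u (t, X.2)) X.1‖ ^ 2 + ‖deriv (fun t => u (X.1, t)) X.2‖ ^ 2))
          + ∫ X in Icc (0 : ℝ) 2 ×ˢ Icc (0 : ℝ) 2, m X * ‖u X‖ ^ 2) := by
  obtain ⟨M, hM⟩ := hbd
  have hM0 : 0 ≤ M := (abs_nonneg _).trans (hM 0)
  set Q := Icc (0 : ℝ) 2 ×ˢ Icc (0 : ℝ) 2
  set I := ∫ X in Q, m X
  refine ⟨(16 * I + 64 * M + 8) / I, by positivity, fun u hu _ => ?_⟩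
  have hQ : IsCompact Q := isCompact_Icc.prod isCompact_Icc
  have hpoinc := weighted_poincare_Icc_prod hu zero_le_two zero_le_two hmeas.aestronglyMeasurable
    (ae_restrict_of_ae hnonneg) (ae_of_all _ hM)
  have hgrad : ∫ X in Q, (‖partialFst u X‖ ^ 2 + ‖partialSnd u X‖ ^ 2) =
      (∫ X in Q, ‖partialFst u X‖ ^ 2) + ∫ X in Q, ‖partialSnd u X‖ ^ 2 :=
    integral_add ((hu.continuous_partialFst.norm.pow 2).continuousOn.integrableOn_compact hQ)
      ((hu.continuous_partialSnd.norm.pow 2).continuousOn.integrableOn_compact hQ)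
  have hJ1 : 0 ≤ ∫ X in Q, ‖partialFst u X‖ ^ 2 := integral_nonneg fun _ => sq_nonneg _
  have hJ2 : 0 ≤ ∫ X in Q, ‖partialSnd u X‖ ^ 2 := integral_nonneg fun _ => sq_nonneg _
  have hJm : 0 ≤ ∫ X in Q, m X * ‖u X‖ ^ 2 :=
    integral_nonneg_of_ae ((ae_restrict_of_ae hnonneg).mono fun X hX => mul_nonneg hX (sq_nonneg _))
  change _ ≤ _ * ((∫ X in Q, (‖partialFst u X‖ ^ 2 + ‖partialSnd u X‖ ^ 2)) + _)
  rw [hgrad, div_mul_eq_mul_div, le_div_iff₀ hpos]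
  simp only [sub_zero] at hpoinc
  nlinarith
end
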